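/- With D as in the EKR (1.2.1) normal form spanned by Z₁ = x₃∂_t + x₂x₃∂_{x₁} + y₂x₃∂_{y₁} + ∂_{x₂} + y₃∂_{y₂} + (b+x₄)∂_{x₃} + (c+y₄)∂_{y₃}, Z₂ = ∂_{x₄}, Z₃ = ∂_{y₄} on ℝ⁹, and (b,c) ≠ (0,0), the small growth vector of D at the origin is [3, 5, 7, 8, 9]. -/

import Mathlib

/-- ℝ⁹ with coordinates t, x₁, y₁, x₂, y₂, x₃, y₃, x₄, y₄ (indices 0,…,8). -/
abbrev E9 := Fin 9 → ℝ

/-- Lie bracket of vector fields on ℝ⁹: `[X,Y](v) = DY(v)(X(v)) - DX(v)(Y(v))`. -/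
noncomputable def lieB (X Y : E9 → E9) : E9 → E9 :=
  fun v => fderiv ℝ Y v (X v) - fderiv ℝ X v (Y v)

/-- The EKR (1.2.1) generator
`Z₁ = x₃∂_t + x₂x₃∂_{x₁} + y₂x₃∂_{y₁} + ∂_{x₂} + y₃∂_{y₂} + (b+x₄)∂_{x₃} + (c+y₄)∂_{y₃}`. -/
noncomputable def Zone (b c : ℝ) : E9 → E9 := fun v =>
  ![v 5, v 3 * v 5, v 4 * v 5, 1, v 6, b + v 7, c + v 8, 0, 0]

/-- The generators of the distribution D: Z₁, Z₂ = ∂_{x₄}, Z₃ = ∂_{y₄}. -/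
noncomputable def gens (b c : ℝ) : Set (E9 → E9) :=
  {Zone b c, fun _ => Pi.single 7 1, fun _ => Pi.single 8 1}

/-- Generating vector fields of the small flag: `SmallSet b c k` generates
`V_{k+1}`, where V₁ = D and V_{i+1} = V_i + [D, V_i]. -/
noncomputable def SmallSet (b c : ℝ) : ℕ → Set (E9 → E9)
  | 0 => gens b c
  | k + 1 => SmallSet b c k ∪
      {W | ∃ X ∈ gens b c, ∃ Y ∈ SmallSet b c k, W = lieB X Y}

/-- The fiber at 0 of the member `V_{k+1}` of the small flag. -/
noncomputable def smallFiber (b c : ℝ) (k : ℕ) : Submodule ℝ E9 :=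
  Submodule.span ℝ ((fun W : E9 → E9 => W 0) '' SmallSet b c k)


/-! The brackets of `Z₁` with `∂_{x₄}, ∂_{y₄}` produce `∂_{x₃}, ∂_{y₃}`, then
`∂_t + x₂∂_{x₁} + y₂∂_{y₁}` and `∂_{y₂}`, then `∂_{x₁} + y₃∂_{y₁}` and `-x₃∂_{y₁}`, whose brackets
with `Z₁` take the values `c ∂_{y₁}` and `-b ∂_{y₁}` at the origin. Since the bracket is linear on
differentiable fields, each generating set of the small flag has the same span as an explicit
finite list of these fields, so each fiber at `0` is spanned by `Z₁(0) = ∂_{x₂} + b∂_{x₃} + c∂_{y₃}`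
together with coordinate vectors other than `∂_{x₂}`, and these are linearly independent. -/

open Submodule Set VectorField

theorem Submodule.mem_span_of_neg_mem {R M : Type*} [Ring R] [AddCommGroup M] [Module R M]
    {s : Set M} {x : M} (h : -x ∈ s) : x ∈ span R s :=
  neg_neg x ▸ neg_mem (subset_span h)

theorem Submodule.finrank_span_insert_image_single {K ι : Type*} [Field K] [DecidableEq ι]
    {I : Finset ι} {x : ι → K} {i : ι} (hi : i ∉ I) (hx : x i ≠ 0) :
    Module.finrank K (span K (insert x ((fun j => Pi.single j (1 : K)) '' ↑I))) = I.card + 1 := by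
  classical
  have hli := Pi.linearIndependent_single_one ι K
  have hvanish : span K ((fun j => Pi.single j (1 : K)) '' ↑I) ≤
      LinearMap.ker (LinearMap.proj i) := by
    refine span_le.2 ?_
    rintro _ ⟨j, hj, rfl⟩
    have : j ≠ i := fun h => hi (h ▸ hj)
    simp [this.symm]
  have hxI : x ∉ span K ((fun j => Pi.single j (1 : K)) '' ↑I) := fun h =>
    hx (by simpa using hvanish h)
  have hliI := ((hli.linearIndepOn I).id_image).id_insert hxI
  rw [← Finset.coe_image, ← Finset.coe_insert] at hliI ⊢
  rw [finrank_span_finset_eq_card hliI, Finset.card_insert_of_notMem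
    (fun h => hxI (subset_span (by simpa using h))), Finset.card_image_of_injective _ hli.injective]

namespace EKR121

lemma lieB_eq_lieBracket : lieB = lieBracket ℝ := rfl

@[simp] lemma lieB_self (X : E9 → E9) : lieB X X = 0 := lieBracket_self

lemma lieB_swap (X Y : E9 → E9) : lieB X Y = -lieB Y X := by
  funext v
  exact lieBracket_swap

lemma differentiable_of_mem_span {s : Set (E9 → E9)} (hs : ∀ Y ∈ s, Differentiable ℝ Y)
    {Y : E9 → E9} (hY : Y ∈ span ℝ s) : Differentiable ℝ Y := by
  induction hY using span_induction with
  | mem Y hY => exact hs Y hY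
  | zero => exact differentiable_const 0
  | add Y₁ Y₂ _ _ h₁ h₂ => exact h₁.add h₂
  | smul a Y _ h => exact h.const_smul a

lemma lieB_mem_span_image (X : E9 → E9) {s : Set (E9 → E9)} (hs : ∀ Y ∈ s, Differentiable ℝ Y)
    {Y : E9 → E9} (hY : Y ∈ span ℝ s) : lieB X Y ∈ span ℝ (lieB X '' s) := by
  induction hY using span_induction with
  | mem Y hY => exact subset_span (mem_image_of_mem _ hY)
  | zero => simp [lieB_eq_lieBracket]
  | add Y₁ Y₂ hY₁ hY₂ h₁ h₂ =>
    have : lieB X (Y₁ + Y₂) = lieB X Y₁ + lieB X Y₂ := funext fun v =>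
      lieBracket_add_right (differentiable_of_mem_span hs hY₁ v)
        (differentiable_of_mem_span hs hY₂ v)
    exact this ▸ add_mem h₁ h₂
  | smul a Y hY h =>
    have : lieB X (a • Y) = a • lieB X Y := funext fun v =>
      lieBracket_const_smul_right (differentiable_of_mem_span hs hY v)
    exact this ▸ smul_mem _ a h

lemma span_image2_lieB_le (G : Set (E9 → E9)) {s t : Set (E9 → E9)}
    (ht : ∀ Y ∈ t, Differentiable ℝ Y) (hst : s ⊆ span ℝ t) :
    span ℝ (image2 lieB G s) ≤ span ℝ (image2 lieB G t) := by
  refine span_le.2 ?_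
  rintro _ ⟨X, hX, Y, hY, rfl⟩
  exact span_mono (image_subset_image2_right hX) (lieB_mem_span_image X ht (hst hY))

lemma span_image_eval_zero (s : Set (E9 → E9)) :
    span ℝ ((fun W : E9 → E9 => W 0) '' s) =
      (span ℝ s).map (LinearMap.proj (R := ℝ) (φ := fun _ : E9 => E9) 0) :=
  span_image (LinearMap.proj (R := ℝ) (φ := fun _ : E9 => E9) 0)

section SmallFlag

variable (b c : ℝ)

lemma smallSet_succ (k : ℕ) :
    SmallSet b c (k + 1) = SmallSet b c k ∪ image2 lieB (gens b c) (SmallSet b c k) := by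
  ext W
  simp only [SmallSet, mem_union, mem_image2, mem_ofPred_eq, eq_comm]

lemma span_smallSet_succ {k : ℕ} {s : Set (E9 → E9)}
    (hk : span ℝ (SmallSet b c k) = span ℝ s) (hs : ∀ Y ∈ s, Differentiable ℝ Y) :
    span ℝ (SmallSet b c (k + 1)) = span ℝ (s ∪ image2 lieB (gens b c) s) := by
  have hSs : SmallSet b c k ⊆ span ℝ s := hk ▸ subset_span
  have hsS : s ⊆ span ℝ (SmallSet b c k) := hk ▸ subset_span
  have hS : ∀ Y ∈ SmallSet b c k, Differentiable ℝ Y := fun Y hY =>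
    differentiable_of_mem_span hs (hSs hY)
  rw [smallSet_succ, span_union, span_union, hk,
    le_antisymm (span_image2_lieB_le _ hs hSs) (span_image2_lieB_le _ hS hsS)]

lemma smallFiber_eq_span_image {k : ℕ} {s : Set (E9 → E9)}
    (hk : span ℝ (SmallSet b c k) = span ℝ s) :
    smallFiber b c k = span ℝ ((fun W : E9 → E9 => W 0) '' s) := by
  rw [smallFiber, span_image_eval_zero, span_image_eval_zero, hk]

lemma apply_zero_mem_smallFiber {k : ℕ} {W : E9 → E9} (hW : W ∈ span ℝ (SmallSet b c k)) :
    W 0 ∈ smallFiber b c k := by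
  rw [smallFiber, span_image_eval_zero]
  exact mem_map_of_mem hW

lemma smallFiber_mono (k : ℕ) : smallFiber b c k ≤ smallFiber b c (k + 1) :=
  span_mono (image_mono subset_union_left)

end SmallFlag

noncomputable def coordField (i : Fin 9) : E9 → E9 := fun _ => Pi.single i 1

-- In the paper's coordinates: `∂_t + x₂∂_{x₁} + y₂∂_{y₁}`, `∂_{x₁} + y₃∂_{y₁}` and `-x₃∂_{y₁}`.
noncomputable def fieldT : E9 → E9 := fun v => ![1, v 3, v 4, 0, 0, 0, 0, 0, 0]
noncomputable def fieldX1 : E9 → E9 := fun v => ![0, 1, v 6, 0, 0, 0, 0, 0, 0]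
noncomputable def fieldY1 : E9 → E9 := fun v => ![0, 0, -v 5, 0, 0, 0, 0, 0, 0]

lemma differentiable_coordField (i : Fin 9) : Differentiable ℝ (coordField i) :=
  differentiable_const _

lemma differentiable_Zone (b c : ℝ) : Differentiable ℝ (Zone b c) :=
  differentiable_pi.2 fun i => by fin_cases i <;> simp [Zone] <;> fun_prop

lemma differentiable_fieldT : Differentiable ℝ fieldT :=
  differentiable_pi.2 fun i => by fin_cases i <;> simp [fieldT] <;> fun_prop

lemma differentiable_fieldX1 : Differentiable ℝ fieldX1 :=
  differentiable_pi.2 fun i => by fin_cases i <;> simp [fieldX1]; fun_prop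

lemma differentiable_fieldY1 : Differentiable ℝ fieldY1 :=
  differentiable_pi.2 fun i => by fin_cases i <;> simp [fieldY1]; fun_prop

@[simp] lemma fderiv_coordField (i : Fin 9) (v : E9) : fderiv ℝ (coordField i) v = 0 :=
  fderiv_const_apply _

lemma fderiv_coord (i : Fin 9) (v : E9) :
    fderiv ℝ (fun u : E9 => u i) v = ContinuousLinearMap.proj i :=
  (hasFDerivAt_apply i v).fderiv

lemma fderiv_apply_eq_pi {Y : E9 → E9} {v : E9} (hY : DifferentiableAt ℝ Y v) (w : E9) :
    fderiv ℝ Y v w = fun i => fderiv ℝ (fun u => Y u i) v w := by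
  funext i
  rw [fderiv_apply hY i]
  rfl

lemma fderiv_Zone_apply (b c : ℝ) (v w : E9) : fderiv ℝ (Zone b c) v w =
    ![w 5, v 3 * w 5 + v 5 * w 3, v 4 * w 5 + v 5 * w 4, 0, w 6, w 7, w 8, 0, 0] := by
  rw [fderiv_apply_eq_pi (differentiable_Zone b c v)]
  ext i
  fin_cases i <;> simp [Zone, fderiv_fun_mul, differentiableAt_apply, fderiv_coord]

lemma fderiv_fieldT_apply (v w : E9) :
    fderiv ℝ fieldT v w = ![0, w 3, w 4, 0, 0, 0, 0, 0, 0] := by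
  rw [fderiv_apply_eq_pi (differentiable_fieldT v)]
  ext i
  fin_cases i <;> simp [fieldT, fderiv_coord]

lemma fderiv_fieldX1_apply (v w : E9) :
    fderiv ℝ fieldX1 v w = ![0, 0, w 6, 0, 0, 0, 0, 0, 0] := by
  rw [fderiv_apply_eq_pi (differentiable_fieldX1 v)]
  ext i
  fin_cases i <;> simp [fieldX1, fderiv_coord]

lemma fderiv_fieldY1_apply (v w : E9) :
    fderiv ℝ fieldY1 v w = ![0, 0, -w 5, 0, 0, 0, 0, 0, 0] := by
  rw [fderiv_apply_eq_pi (differentiable_fieldY1 v)]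
  ext i
  fin_cases i <;> simp [fieldY1, fderiv_coord]

@[simp] lemma fieldT_zero : fieldT 0 = Pi.single 0 1 := by
  ext i; fin_cases i <;> simp [fieldT]

@[simp] lemma fieldX1_zero : fieldX1 0 = Pi.single 1 1 := by
  ext i; fin_cases i <;> simp [fieldX1]

@[simp] lemma fieldY1_zero : fieldY1 0 = 0 := by
  ext i; fin_cases i <;> simp [fieldY1]

lemma lieB_coordField_left (i : Fin 9) (Y : E9 → E9) :
    lieB (coordField i) Y = fun v => fderiv ℝ Y v (Pi.single i 1) := by
  funext v
  simp [lieB, coordField]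

section Brackets

variable (b c : ℝ)

@[simp] lemma lieB_coordField_coordField (i j : Fin 9) :
    lieB (coordField i) (coordField j) = 0 := by
  funext v
  simp [lieB_coordField_left]

@[simp] lemma lieB_Zone_coordField (i : Fin 9) :
    lieB (Zone b c) (coordField i) = -lieB (coordField i) (Zone b c) :=
  lieB_swap _ _

@[simp] lemma lieB_coordField_four_Zone : lieB (coordField 4) (Zone b c) = -fieldY1 := by
  ext v i; fin_cases i <;> simp [lieB_coordField_left, fderiv_Zone_apply, fieldY1]

@[simp] lemma lieB_coordField_five_Zone : lieB (coordField 5) (Zone b c) = fieldT := by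
  ext v i; fin_cases i <;> simp [lieB_coordField_left, fderiv_Zone_apply, fieldT]

@[simp] lemma lieB_coordField_six_Zone : lieB (coordField 6) (Zone b c) = coordField 4 := by
  ext v i; fin_cases i <;> simp [lieB_coordField_left, fderiv_Zone_apply, coordField]

@[simp] lemma lieB_coordField_seven_Zone : lieB (coordField 7) (Zone b c) = coordField 5 := by
  ext v i; fin_cases i <;> simp [lieB_coordField_left, fderiv_Zone_apply, coordField]

@[simp] lemma lieB_coordField_eight_Zone : lieB (coordField 8) (Zone b c) = coordField 6 := by
  ext v i; fin_cases i <;> simp [lieB_coordField_left, fderiv_Zone_apply, coordField]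

@[simp] lemma lieB_coordField_fieldT {i : Fin 9} (h3 : i ≠ 3) (h4 : i ≠ 4) :
    lieB (coordField i) fieldT = 0 := by
  rw [lieB_coordField_left]
  ext v j
  fin_cases j <;> simp [fderiv_fieldT_apply, h3.symm, h4.symm]

@[simp] lemma lieB_Zone_fieldT : lieB (Zone b c) fieldT = fieldX1 := by
  ext v i
  fin_cases i <;> simp [lieB, fderiv_Zone_apply, fderiv_fieldT_apply, Zone, fieldT, fieldX1]

lemma lieB_Zone_fieldX1_zero : lieB (Zone b c) fieldX1 0 = c • Pi.single 2 1 := by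
  ext i
  fin_cases i <;> simp [lieB, fderiv_Zone_apply, fderiv_fieldX1_apply, Zone, fieldX1]

lemma lieB_Zone_fieldY1_zero : lieB (Zone b c) fieldY1 0 = -b • Pi.single 2 1 := by
  ext i
  fin_cases i <;> simp [lieB, fderiv_Zone_apply, fderiv_fieldY1_apply, Zone, fieldY1]

end Brackets

section Spans

variable (b c : ℝ)

lemma gens_eq : gens b c = {Zone b c, coordField 7, coordField 8} := rfl

noncomputable def gens₁ : Set (E9 → E9) :=
  {Zone b c, coordField 5, coordField 6, coordField 7, coordField 8}

noncomputable def gens₂ : Set (E9 → E9) :=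
  {Zone b c, fieldT, coordField 4, coordField 5, coordField 6, coordField 7, coordField 8}

noncomputable def gens₃ : Set (E9 → E9) :=
  {fieldY1, Zone b c, fieldT, fieldX1, coordField 4, coordField 5, coordField 6, coordField 7,
    coordField 8}

lemma span_smallSet_one : span ℝ (SmallSet b c 1) = span ℝ (gens₁ b c) := by
  rw [span_smallSet_succ b c (s := gens b c) rfl
    (by simp [gens_eq, differentiable_Zone, differentiable_coordField])]
  refine le_antisymm (span_le.2 ?_) (span_le.2 ?_)
  · simp [gens_eq, gens₁, insert_subset_iff, mem_span_of_mem]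
  · simp [gens_eq, gens₁, insert_subset_iff, image_insert_eq, mem_span_of_mem]

lemma span_smallSet_two : span ℝ (SmallSet b c 2) = span ℝ (gens₂ b c) := by
  rw [span_smallSet_succ b c (span_smallSet_one b c)
    (by simp [gens₁, differentiable_Zone, differentiable_coordField])]
  refine le_antisymm (span_le.2 ?_) (span_le.2 ?_)
  · simp [gens_eq, gens₁, gens₂, insert_subset_iff, mem_span_of_mem]
  · simp [gens_eq, gens₁, gens₂, insert_subset_iff, image_insert_eq, mem_span_of_mem,
      mem_span_of_neg_mem]

lemma span_smallSet_three : span ℝ (SmallSet b c 3) = span ℝ (gens₃ b c) := by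
  rw [span_smallSet_succ b c (span_smallSet_two b c)
    (by simp [gens₂, differentiable_Zone, differentiable_coordField, differentiable_fieldT])]
  refine le_antisymm (span_le.2 ?_) (span_le.2 ?_)
  · simp [gens_eq, gens₂, gens₃, insert_subset_iff, mem_span_of_mem]
  · simp [gens_eq, gens₂, gens₃, insert_subset_iff, image_insert_eq, mem_span_of_mem]

lemma span_smallSet_four : span ℝ (SmallSet b c 4) =
    span ℝ (gens₃ b c ∪ image2 lieB (gens b c) (gens₃ b c)) :=
  span_smallSet_succ b c (span_smallSet_three b c) (by
    simp [gens₃, differentiable_Zone, differentiable_coordField, differentiable_fieldT,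
      differentiable_fieldX1, differentiable_fieldY1])

end Spans

section Fibers

variable (b c : ℝ)

noncomputable def spanZoneCoord (I : Finset (Fin 9)) : Submodule ℝ E9 :=
  span ℝ (insert (Zone b c 0) ((fun j => Pi.single j 1) '' ↑I))

lemma finrank_spanZoneCoord (I : Finset (Fin 9)) (h3 : 3 ∉ I) :
    Module.finrank ℝ (spanZoneCoord b c I) = I.card + 1 :=
  finrank_span_insert_image_single h3 (by simp [Zone])

lemma smallFiber_zero : smallFiber b c 0 = spanZoneCoord b c {7, 8} := by
  rw [smallFiber_eq_span_image b c (s := gens b c) rfl, spanZoneCoord]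
  simp [gens_eq, coordField, image_insert_eq]

lemma smallFiber_one : smallFiber b c 1 = spanZoneCoord b c {5, 6, 7, 8} := by
  rw [smallFiber_eq_span_image b c (span_smallSet_one b c), spanZoneCoord]
  simp [gens₁, coordField, image_insert_eq]

lemma smallFiber_two : smallFiber b c 2 = spanZoneCoord b c {0, 4, 5, 6, 7, 8} := by
  rw [smallFiber_eq_span_image b c (span_smallSet_two b c), spanZoneCoord]
  simp [gens₂, coordField, image_insert_eq]

lemma smallFiber_three : smallFiber b c 3 = spanZoneCoord b c {0, 1, 4, 5, 6, 7, 8} := by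
  rw [smallFiber_eq_span_image b c (span_smallSet_three b c), spanZoneCoord]
  simp [gens₃, coordField, image_insert_eq]

lemma single_two_mem_smallFiber_four (hbc : (b, c) ≠ (0, 0)) :
    (Pi.single 2 1 : E9) ∈ smallFiber b c 4 := by
  have hmem {Y : E9 → E9} (hY : Y ∈ gens₃ b c) : lieB (Zone b c) Y 0 ∈ smallFiber b c 4 :=
    apply_zero_mem_smallFiber b c (span_smallSet_four b c ▸ subset_span
      (Or.inr (mem_image2_of_mem (by simp [gens_eq]) hY)))
  by_cases hc : c = 0
  · have hb : -b ≠ 0 := by simpa [hc] using hbc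
    have := hmem (Y := fieldY1) (by simp [gens₃])
    rwa [lieB_Zone_fieldY1_zero, smul_mem_iff _ hb] at this
  · have := hmem (Y := fieldX1) (by simp [gens₃])
    rwa [lieB_Zone_fieldX1_zero, smul_mem_iff _ hc] at this

lemma spanZoneCoord_le_smallFiber_four (hbc : (b, c) ≠ (0, 0)) :
    spanZoneCoord b c {2, 0, 1, 4, 5, 6, 7, 8} ≤ smallFiber b c 4 := by
  have h3 := smallFiber_mono b c 3
  rw [smallFiber_three, spanZoneCoord] at h3
  rw [spanZoneCoord, span_le, Finset.coe_insert, image_insert_eq, insert_comm, insert_subset_iff]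
  exact ⟨single_two_mem_smallFiber_four b c hbc, fun _ hx => h3 (subset_span hx)⟩

lemma finrank_smallFiber_four (hbc : (b, c) ≠ (0, 0)) :
    Module.finrank ℝ (smallFiber b c 4) = 9 := by
  have h := finrank_mono (spanZoneCoord_le_smallFiber_four b c hbc)
  rw [finrank_spanZoneCoord b c _ (by decide)] at h
  exact le_antisymm ((finrank_le _).trans_eq (Module.finrank_fin_fun ℝ)) h

end Fibers

end EKR121

open EKR121

/-- For `(b,c) ≠ (0,0)`, the small growth vector at the origin of the
distribution spanned by Z₁, ∂_{x₄}, ∂_{y₄} is [3, 5, 7, 8, 9]. -/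
theorem small_growth_vector_121 (b c : ℝ) (hbc : (b, c) ≠ (0, 0)) :
    Module.finrank ℝ (smallFiber b c 0) = 3 ∧
    Module.finrank ℝ (smallFiber b c 1) = 5 ∧
    Module.finrank ℝ (smallFiber b c 2) = 7 ∧
    Module.finrank ℝ (smallFiber b c 3) = 8 ∧
    Module.finrank ℝ (smallFiber b c 4) = 9 := by
  refine ⟨?_, ?_, ?_, ?_, finrank_smallFiber_four b c hbc⟩
  · rw [smallFiber_zero]; exact finrank_spanZoneCoord b c _ (by decide)
  · rw [smallFiber_one]; exact finrank_spanZoneCoord b c _ (by decide)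
  · rw [smallFiber_two]; exact finrank_spanZoneCoord b c _ (by decide)
  · rw [smallFiber_three]; exact finrank_spanZoneCoord b c _ (by decide)
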